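/- The set of units U(X) is dense in C(X) with the topology of uniform convergence if and only if X is strongly zero-dimensional. -/

import Mathlib

open TopologicalSpace
open scoped ENNReal NNReal

variable {X : Type*}

/-- The (possibly infinite) sup-distance between two continuous functions. -/
noncomputable def supDist [TopologicalSpace X] (f g : C(X, ℝ)) : ℝ≥0∞ :=
  ⨆ x, (‖f x - g x‖₊ : ℝ≥0∞)

/-- Basic set for the `U^I`-topology. -/
def UIball [TopologicalSpace X] (I : Ideal C(X, ℝ)) (f : C(X, ℝ)) (ε : ℝ) :
    Set C(X, ℝ) :=
  {g | supDist f g < ENNReal.ofReal ε ∧ f - g ∈ I}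

/-- The `U^I`-topology on `C(X, ℝ)`. -/
def UItop [TopologicalSpace X] (I : Ideal C(X, ℝ)) : TopologicalSpace C(X, ℝ) :=
  generateFrom {S | ∃ f ε, 0 < ε ∧ S = UIball I f ε}

/-- Basic set for the `m^I`-topology. -/
def mIball [TopologicalSpace X] (I : Ideal C(X, ℝ)) (f u : C(X, ℝ)) :
    Set C(X, ℝ) :=
  {g | (∀ x, |f x - g x| < u x) ∧ f - g ∈ I}

/-- The `m^I`-topology on `C(X, ℝ)`. -/
def mItop [TopologicalSpace X] (I : Ideal C(X, ℝ)) : TopologicalSpace C(X, ℝ) :=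
  generateFrom {S | ∃ f u, (∀ x, 0 < u x) ∧ S = mIball I f u}

/-- The topology of uniform convergence (`U`-topology) on `C(X, ℝ)`. -/
def Utop [TopologicalSpace X] : TopologicalSpace C(X, ℝ) :=
  generateFrom {S | ∃ (f : C(X, ℝ)) (ε : ℝ), 0 < ε ∧
    S = {g | supDist f g < ENNReal.ofReal ε}}

/-- The `m`-topology on `C(X, ℝ)`. -/
def mtop [TopologicalSpace X] : TopologicalSpace C(X, ℝ) :=
  generateFrom {S | ∃ (f u : C(X, ℝ)), (∀ x, 0 < u x) ∧
    S = {g | ∀ x, |f x - g x| < u x}}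

/-- The bounded continuous functions `C*(X)` as a subset of `C(X, ℝ)`. -/
def Cstar [TopologicalSpace X] : Set C(X, ℝ) :=
  {f | ∃ M : ℝ, ∀ x, |f x| ≤ M}

lemma supDist_self [TopologicalSpace X] (f : C(X, ℝ)) : supDist f f = 0 := by
  simp [supDist]

lemma supDist_pointwise_lt [TopologicalSpace X] {f g : C(X, ℝ)} {ε : ℝ} (hε : 0 < ε)
    (h : supDist f g < ENNReal.ofReal ε) (x : X) : |f x - g x| < ε := by
  have h1 : (‖f x - g x‖₊ : ℝ≥0∞) < ENNReal.ofReal ε :=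
    lt_of_le_of_lt (le_iSup (fun x => (‖f x - g x‖₊ : ℝ≥0∞)) x) h
  rw [← enorm_eq_nnnorm, ← ofReal_norm] at h1
  rw [← Real.norm_eq_abs]
  exact (ENNReal.ofReal_lt_ofReal_iff hε).mp h1

lemma supDist_le [TopologicalSpace X] {f g : C(X, ℝ)} {c : ℝ} (h : ∀ x, |f x - g x| ≤ c) :
    supDist f g ≤ ENNReal.ofReal c := by
  refine iSup_le fun x => ?_
  rw [← enorm_eq_nnnorm, ← ofReal_norm]
  exact ENNReal.ofReal_le_ofReal (by rw [Real.norm_eq_abs]; exact h x)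

lemma supDist_triangle [TopologicalSpace X] (f g k : C(X, ℝ)) :
    supDist f k ≤ supDist f g + supDist g k := by
  unfold supDist
  refine iSup_le fun x => ?_
  have h1 : (‖f x - k x‖₊ : ℝ≥0∞) ≤ (‖f x - g x‖₊ : ℝ≥0∞) + (‖g x - k x‖₊ : ℝ≥0∞) := by
    have : f x - k x = (f x - g x) + (g x - k x) := by ring
    rw [this]
    exact_mod_cast nnnorm_add_le _ _
  exact h1.trans (add_le_add (le_iSup (fun x => (‖f x - g x‖₊ : ℝ≥0∞)) x)
    (le_iSup (fun x => (‖g x - k x‖₊ : ℝ≥0∞)) x))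

lemma ball_subset [TopologicalSpace X] {f g : C(X, ℝ)} {ε : ℝ} (hε : 0 < ε)
    (h : supDist f g < ENNReal.ofReal ε) :
    ∃ δ : ℝ, 0 < δ ∧ ∀ k : C(X, ℝ), supDist g k < ENNReal.ofReal δ →
      supDist f k < ENNReal.ofReal ε := by
  have hfin : supDist f g ≠ ⊤ := (h.trans ENNReal.ofReal_lt_top).ne
  have hd : (supDist f g).toReal < ε := (ENNReal.lt_ofReal_iff_toReal_lt hfin).mp h
  refine ⟨(ε - (supDist f g).toReal) / 2, by linarith, fun k hk => ?_⟩
  calc supDist f k ≤ supDist f g + supDist g k := supDist_triangle f g k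
    _ < supDist f g + ENNReal.ofReal ((ε - (supDist f g).toReal) / 2) :=
        ENNReal.add_lt_add_left hfin hk
    _ = ENNReal.ofReal ((supDist f g).toReal + (ε - (supDist f g).toReal) / 2) := by
        rw [ENNReal.ofReal_add ENNReal.toReal_nonneg (by linarith), ENNReal.ofReal_toReal hfin]
    _ < ENNReal.ofReal ε := (ENNReal.ofReal_lt_ofReal_iff hε).mpr (by linarith)

lemma ballBasis [TopologicalSpace X] :
    @IsTopologicalBasis C(X, ℝ) Utop
      {S | ∃ (f : C(X, ℝ)) (ε : ℝ), 0 < ε ∧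
        S = {g | supDist f g < ENNReal.ofReal ε}} := by
  letI : TopologicalSpace C(X, ℝ) := Utop
  refine ⟨?_, ?_, rfl⟩
  · rintro t₁ ⟨f₁, ε₁, hε₁, rfl⟩ t₂ ⟨f₂, ε₂, hε₂, rfl⟩ g ⟨hg₁, hg₂⟩
    obtain ⟨δ₁, hδ₁, h₁⟩ := ball_subset hε₁ hg₁
    obtain ⟨δ₂, hδ₂, h₂⟩ := ball_subset hε₂ hg₂
    refine ⟨{k | supDist g k < ENNReal.ofReal (min δ₁ δ₂)},
      ⟨g, min δ₁ δ₂, lt_min hδ₁ hδ₂, rfl⟩,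
      by simp [supDist_self g, ENNReal.ofReal_pos.mpr (lt_min hδ₁ hδ₂), hδ₁, hδ₂],
      fun k hk => ⟨h₁ k (hk.trans_le (ENNReal.ofReal_le_ofReal (min_le_left _ _))),
        h₂ k (hk.trans_le (ENNReal.ofReal_le_ofReal (min_le_right _ _)))⟩⟩
  · apply Set.eq_univ_of_forall
    intro f
    exact ⟨{g | supDist f g < ENNReal.ofReal 1}, ⟨f, 1, one_pos, rfl⟩,
      by simp [supDist_self f]⟩


theorem stmt12 [TopologicalSpace X] [T2Space X] [CompletelyRegularSpace X] :
    @Dense C(X, ℝ) Utop {u : C(X, ℝ) | ∀ x, u x ≠ 0} ↔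
      (∀ Z Z' : Set X, (∃ f : C(X, ℝ), Z = f ⁻¹' {0}) →
        (∃ g : C(X, ℝ), Z' = g ⁻¹' {0}) → Disjoint Z Z' →
          ∃ C : Set X, IsClopen C ∧ Z ⊆ C ∧ C ⊆ Z'ᶜ) := by

  classical
  letI : TopologicalSpace C(X, ℝ) := Utop
  constructor
  · intro hDense Z Z' hZ hZ' hdisj
    obtain ⟨f, rfl⟩ := hZ
    obtain ⟨g, rfl⟩ := hZ'
    have hne : ∀ x, |f x| + |g x| ≠ 0 := by
      intro x hx0
      have hf0 : |f x| = 0 := by nlinarith [abs_nonneg (f x), abs_nonneg (g x)]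
      have hg0 : |g x| = 0 := by nlinarith [abs_nonneg (f x), abs_nonneg (g x)]
      have hxZ : x ∈ f ⁻¹' {0} := by simp [abs_eq_zero.mp hf0]
      have hxZ' : x ∈ g ⁻¹' {0} := by simp [abs_eq_zero.mp hg0]
      exact Set.disjoint_left.mp hdisj hxZ hxZ'
    set h : C(X, ℝ) := ⟨fun x => (|f x| - |g x|) / (|f x| + |g x|),
      Continuous.div ((f.continuous.abs).sub (g.continuous.abs))
        ((f.continuous.abs).add (g.continuous.abs)) hne⟩ with hh
    have hball : IsOpen {k : C(X, ℝ) | supDist h k < ENNReal.ofReal 1} :=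
      isOpen_generateFrom_of_mem ⟨h, 1, one_pos, rfl⟩
    obtain ⟨u, hu_ball, hu_unit⟩ := hDense.inter_open_nonempty _ hball
      ⟨h, by simp [Set.mem_setOf_eq, supDist_self h]⟩
    have hpt := supDist_pointwise_lt one_pos hu_ball
    refine ⟨u ⁻¹' (Set.Iio 0), ⟨?_, isOpen_Iio.preimage u.continuous⟩, ?_, ?_⟩
    · have heq : u ⁻¹' (Set.Iio 0) = u ⁻¹' (Set.Iic 0) := by
        ext x
        simp only [Set.mem_preimage, Set.mem_Iio, Set.mem_Iic]
        exact ⟨le_of_lt, fun hle => hle.lt_of_ne (hu_unit x)⟩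
      rw [heq]
      exact isClosed_Iic.preimage u.continuous
    · intro x hx
      have hfx : f x = 0 := hx
      have hgx : g x ≠ 0 := fun hg0 => Set.disjoint_left.mp hdisj hx hg0
      have hhx : h x = -1 := by
        show (|f x| - |g x|) / (|f x| + |g x|) = -1
        rw [hfx, abs_zero, zero_sub, zero_add, neg_div, div_self (abs_ne_zero.mpr hgx)]
      have habs := abs_lt.mp (hpt x)
      rw [hhx] at habs
      show u x < 0
      linarith [habs.1]
    · intro x hx hx'
      have hgx : g x = 0 := hx'
      have hfx : f x ≠ 0 := fun h0 => Set.disjoint_left.mp hdisj h0 hx'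
      have hhx : h x = 1 := by
        show (|f x| - |g x|) / (|f x| + |g x|) = 1
        rw [hgx, abs_zero, sub_zero, add_zero, div_self (abs_ne_zero.mpr hfx)]
      have habs := abs_lt.mp (hpt x)
      rw [hhx] at habs
      have hux : u x < 0 := hx
      linarith [habs.2]
  · intro hSZD
    rw [ballBasis.dense_iff]
    rintro o ⟨f, ε, hε, rfl⟩ -
    set w : C(X, ℝ) := ⟨fun x => min |f x| (ε/4) - ε/4,
      ((f.continuous.abs.min continuous_const).sub continuous_const)⟩ with hw
    have hdisj : Disjoint (f ⁻¹' {0}) (w ⁻¹' {0}) := by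
      rw [Set.disjoint_left]
      intro x hx hx'
      have hfx : f x = 0 := hx
      have hwx : w x = 0 := hx'
      have : min |f x| (ε/4) - ε/4 = 0 := hwx
      rw [hfx, abs_zero, min_eq_left (by linarith : (0:ℝ) ≤ ε/4)] at this
      linarith
    obtain ⟨C, hC, hZC, hCZ'⟩ := hSZD _ _ ⟨f, rfl⟩ ⟨w, rfl⟩ hdisj
    have hsmall : ∀ x ∈ C, |f x| < ε/4 := by
      intro x hx
      have hx' : w x ≠ 0 := hCZ' hx
      have h1 : min |f x| (ε/4) ≠ ε/4 := by
        intro he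
        exact hx' (by show min |f x| (ε/4) - ε/4 = 0; rw [he]; ring)
      have h2 : min |f x| (ε/4) < ε/4 := lt_of_le_of_ne (min_le_right _ _) h1
      rcases min_lt_iff.mp h2 with h | h
      · exact h
      · exact absurd h (lt_irrefl _)
    set u : C(X, ℝ) := ⟨C.piecewise (fun _ => ε/4) f,
      Continuous.piecewise (by simp [hC.frontier_eq]) continuous_const f.continuous⟩ with hu
    refine ⟨u, ?_, ?_⟩
    · show supDist f u < ENNReal.ofReal ε
      have hle : supDist f u ≤ ENNReal.ofReal (ε/2) := by
        apply supDist_le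
        intro x
        by_cases hx : x ∈ C
        · have hux : u x = ε/4 := Set.piecewise_eq_of_mem C (fun _ => (ε/4 : ℝ)) (⇑f) hx
          have hb := abs_lt.mp (hsmall x hx)
          rw [hux, abs_sub_le_iff]
          constructor <;> linarith
        · have hux : u x = f x := Set.piecewise_eq_of_notMem C (fun _ => (ε/4 : ℝ)) (⇑f) hx
          rw [hux, sub_self, abs_zero]
          linarith
      exact lt_of_le_of_lt hle ((ENNReal.ofReal_lt_ofReal_iff hε).mpr (by linarith))
    · intro x
      by_cases hx : x ∈ C
      · have hux : u x = ε/4 := Set.piecewise_eq_of_mem C (fun _ => (ε/4 : ℝ)) (⇑f) hx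
        rw [hux]
        positivity
      · have hux : u x = f x := Set.piecewise_eq_of_notMem C (fun _ => (ε/4 : ℝ)) (⇑f) hx
        rw [hux]
        intro h0
        exact hx (hZC h0)
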